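/- arXiv:1010.5045 — 2 statements merged into one kernel-verified Lean document; each statement's English description precedes it below -/
import Mathlib

section
/- Let $\tau_{i,1}^{(N)}$, $i=1,\dots,N$, be independent random variables with $\mathbb{P}[\tau_{i,1}^{(N)} > t] = e^{-\rho_i^{(N)}((0,t])}$ (the first jump time of a Poisson random measure with continuous intensity $\rho_i^{(N)}$). Fix $t\ge 0$ and assume the empirical distributions $\lambda_t^{(N)} = \frac1N\sum_{i=1}^N \delta_{\rho_i^{(N)}((0,t])}$ on $[0,\infty)$ converge weakly to a probability distribution $\lambda_t$. Then $Y_C^{(N)}(t) := \frac1N\sum_{i=1}^N \mathbf{1}\{\tau_{i,1}^{(N)} \le t\}$ converges almost surely as $N\to\infty$ to $y_C(t) = 1 - \int_0^\infty e^{-s}\,\lambda_t(ds)$. -/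
/-!
The indicators `1{τ N i ≤ t}`, `i < N`, are independent and `[0, 1]`-valued, hence
sub-Gaussian after centering (Hoeffding's lemma). Hoeffding's inequality bounds the probability
that the `N`-th row average deviates from its mean by `ε` by `2 exp (-2 N ε²)`, which is summable
in `N`; by Borel–Cantelli the deviation tends to `0` almost surely, with no coupling between the
rows of the triangular array needed. The mean of the `N`-th row average is
`1 - ∫ e^{-s} dλ_t^{(N)}`, which tends to `1 - ∫ e^{-s} dλ_t` by weak convergence.
-/

open MeasureTheory Filter ProbabilityTheory Finset Topology
open scoped NNReal ENNReal

namespace ProbabilityTheory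

variable {Ω : Type*} [MeasurableSpace Ω] {μ : Measure Ω}

lemma HasSubgaussianMGF.mono {X : Ω → ℝ} {c c' : ℝ≥0} (h : HasSubgaussianMGF X c μ)
    (hc : c ≤ c') : HasSubgaussianMGF X c' μ where
  integrable_exp_mul := h.integrable_exp_mul
  mgf_le t := (h.mgf_le t).trans (by gcongr)

lemma HasSubgaussianMGF.measureReal_abs_sum_ge_le_of_iIndepFun [IsProbabilityMeasure μ] {ι : Type*}
    {X : ι → Ω → ℝ} (h_indep : iIndepFun X μ) {c : ℝ≥0} {s : Finset ι}
    (h_subG : ∀ i ∈ s, HasSubgaussianMGF (X i) c μ) {ε : ℝ} (hε : 0 ≤ ε) :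
    μ.real {ω | ε ≤ |∑ i ∈ s, X i ω|} ≤ 2 * Real.exp (-ε ^ 2 / (2 * #s * c)) := by
  have h_upper := HasSubgaussianMGF.measure_sum_ge_le_of_iIndepFun h_indep h_subG hε
  have h_lower := HasSubgaussianMGF.measure_sum_ge_le_of_iIndepFun (X := fun i => -X i)
    (h_indep.comp (fun _ => Neg.neg) fun _ => measurable_neg) (fun i hi => (h_subG i hi).neg) hε
  have h_cover : {ω | ε ≤ |∑ i ∈ s, X i ω|}
      ⊆ {ω | ε ≤ ∑ i ∈ s, X i ω} ∪ {ω | ε ≤ ∑ i ∈ s, -X i ω} := by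
    intro ω hω
    simpa only [Set.mem_union, Set.mem_ofPred_eq, sum_neg_distrib, le_abs] using hω
  simp only [Pi.neg_apply, sum_const, nsmul_eq_mul, NNReal.coe_mul, NNReal.coe_natCast,
    ← mul_assoc] at h_upper h_lower
  calc μ.real {ω | ε ≤ |∑ i ∈ s, X i ω|}
      ≤ μ.real {ω | ε ≤ ∑ i ∈ s, X i ω} + μ.real {ω | ε ≤ ∑ i ∈ s, -X i ω} :=
        (measureReal_mono h_cover).trans (measureReal_union_le _ _)
    _ ≤ _ := by linarith

theorem ae_tendsto_zero_of_forall_tsum_measure_le_abs_ne_top {Y : ℕ → Ω → ℝ}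
    (h : ∀ ε > 0, ∑' n, μ {ω | ε ≤ |Y n ω|} ≠ ∞) :
    ∀ᵐ ω ∂μ, Tendsto (fun n => Y n ω) atTop (𝓝 0) := by
  have h_ae : ∀ᵐ ω ∂μ, ∀ k : ℕ, ∀ᶠ n in atTop, |Y n ω| < 1 / (k + 1) := by
    refine ae_all_iff.2 fun k => ?_
    filter_upwards [ae_eventually_notMem (h _ Nat.one_div_pos_of_nat)] with ω hω
    simpa using hω
  filter_upwards [h_ae] with ω hω
  refine Metric.tendsto_nhds.2 fun ε hε => ?_
  obtain ⟨k, hk⟩ := exists_nat_one_div_lt hε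
  filter_upwards [hω k] with n hn
  rw [Real.dist_0_eq_abs]
  exact hn.trans hk

theorem ae_tendsto_sum_div_of_iIndepFun_hasSubgaussianMGF [IsProbabilityMeasure μ]
    {X : ℕ → ℕ → Ω → ℝ} (h_indep : ∀ n, iIndepFun (fun i : Fin n => X n i) μ) {c : ℝ≥0}
    (h_subG : ∀ n i, i < n → HasSubgaussianMGF (X n i) c μ) :
    ∀ᵐ ω ∂μ, Tendsto (fun n : ℕ => (∑ i ∈ range n, X n i ω) / n) atTop (𝓝 0) := by
  refine ae_tendsto_zero_of_forall_tsum_measure_le_abs_ne_top fun ε hε => ?_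
  -- Hoeffding's bound is junk at `c = 0` (it reads `exp (x / 0) = 1`), hence the parameter `c + 1`.
  set r := Real.exp (-ε ^ 2 / (2 * (c + 1)))
  have hr : r < 1 :=
    Real.exp_lt_one_iff.2 (div_neg_of_neg_of_pos (by nlinarith) (by positivity))
  have h_tail (n : ℕ) :
      μ {ω | ε ≤ |(∑ i ∈ range n, X n i ω) / n|} ≤ ENNReal.ofReal (2 * r ^ n) := by
    rcases n.eq_zero_or_pos with rfl | hn
    · simp [hε.not_ge]
    have hn' : (0 : ℝ) < n := Nat.cast_pos.2 hn
    have h_set : {ω | ε ≤ |(∑ i ∈ range n, X n i ω) / n|}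
        = {ω | n * ε ≤ |∑ i : Fin n, X n i ω|} := by
      ext ω
      simp only [Set.mem_ofPred_eq, abs_div, Nat.abs_cast, le_div_iff₀ hn', mul_comm,
        Fin.sum_univ_eq_sum_range (fun i => X n i ω)]
    have h_hoeffding := HasSubgaussianMGF.measureReal_abs_sum_ge_le_of_iIndepFun (h_indep n)
      (s := univ) (c := c + 1) (fun i _ => (h_subG n i i.isLt).mono le_self_add)
      (mul_nonneg hn'.le hε.le)
    rw [h_set, ← ofReal_measureReal]
    refine ENNReal.ofReal_le_ofReal (h_hoeffding.trans_eq ?_)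
    rw [← Real.exp_nat_mul, card_univ, Fintype.card_fin]
    congr 2
    push_cast
    field_simp
  have h_summable : Summable fun n : ℕ => 2 * r ^ n :=
    (summable_geometric_of_lt_one (Real.exp_pos _).le hr).mul_left 2
  refine ne_top_of_le_ne_top ?_ (ENNReal.tsum_le_tsum h_tail)
  rw [← ENNReal.ofReal_tsum_of_nonneg (fun n => by positivity) h_summable]
  exact ENNReal.ofReal_ne_top

theorem integral_ite_le_one_zero_eq [IsProbabilityMeasure μ] {f : Ω → ℝ} (hf : Measurable f)
    (t : ℝ) : ∫ ω, (if f ω ≤ t then (1 : ℝ) else 0) ∂μ = 1 - μ.real {ω | t < f ω} := by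
  have h_ind : (fun ω => if f ω ≤ t then (1 : ℝ) else 0) = {ω | t < f ω}ᶜ.indicator 1 := by
    ext ω
    simp [Set.indicator_apply, not_lt]
  have h_meas : MeasurableSet {ω | t < f ω} := measurableSet_lt measurable_const hf
  rw [h_ind, integral_indicator_one h_meas.compl, probReal_compl_eq_one_sub h_meas]

end ProbabilityTheory

theorem tendsto_sum_exp_neg_div_of_forall_boundedContinuousFunction {x : ℕ → ℕ → ℝ}
    (hx : ∀ n i, 0 ≤ x n i) {ν : Measure ℝ} (hν : ν (Set.Iio 0) = 0)
    (h : ∀ f : BoundedContinuousFunction ℝ ℝ,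
      Tendsto (fun n : ℕ => (∑ i ∈ range n, f (x n i)) / n) atTop (𝓝 (∫ s, f s ∂ν))) :
    Tendsto (fun n : ℕ => (∑ i ∈ range n, Real.exp (-x n i)) / n) atTop
      (𝓝 (∫ s, Real.exp (-s) ∂ν)) := by
  -- `exp (-s)` itself is unbounded; `f` agrees with it on `[0, ∞)`, which carries all the mass.
  let f : BoundedContinuousFunction ℝ ℝ :=
    .ofNormedAddCommGroup (fun s => Real.exp (-max s 0)) (by fun_prop) 1 fun s => by
      simp [Real.norm_eq_abs]
  have h_sum (n : ℕ) : ∑ i ∈ range n, f (x n i) = ∑ i ∈ range n, Real.exp (-x n i) := by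
    simp [f, max_eq_left (hx _ _)]
  have h_int : ∫ s, f s ∂ν = ∫ s, Real.exp (-s) ∂ν := by
    refine integral_congr_ae ?_
    filter_upwards [measure_eq_zero_iff_ae_notMem.1 hν] with s hs
    simp [f, max_eq_left (not_lt.1 (Set.mem_Iio.not.1 hs))]
  simpa only [h_sum, h_int] using h f

theorem stmt1_general
    {Ω : Type*} [MeasurableSpace Ω] (μ : Measure Ω) [IsProbabilityMeasure μ]
    (t : ℝ)
    (ρ : ℕ → ℕ → Measure ℝ)
    (τ : ℕ → ℕ → Ω → ℝ)
    (hτmeas : ∀ N i, Measurable (τ N i))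
    (hτindep : ∀ N, ProbabilityTheory.iIndepFun
      (fun i : Fin N => τ N (i : ℕ)) μ)
    (hτlaw : ∀ N i, i < N →
      μ {ω | t < τ N i ω} =
        ENNReal.ofReal (Real.exp (-((ρ N i (Set.Ioc 0 t)).toReal))))
    (lamt : Measure ℝ) [IsProbabilityMeasure lamt] (hlamsupp : lamt (Set.Iio 0) = 0)
    (hweak : ∀ f : BoundedContinuousFunction ℝ ℝ,
      Tendsto (fun N : ℕ =>
          (∑ i ∈ Finset.range N, f ((ρ N i (Set.Ioc 0 t)).toReal)) / N)
        atTop (nhds (∫ s, f s ∂lamt))) :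
    ∀ᵐ ω ∂μ, Tendsto
      (fun N : ℕ =>
        (∑ i ∈ Finset.range N, if τ N i ω ≤ t then (1 : ℝ) else 0) / N)
      atTop (nhds (1 - ∫ s, Real.exp (-s) ∂lamt)) := by
  set p : ℕ → ℕ → ℝ := fun N i => Real.exp (-(ρ N i (Set.Ioc 0 t)).toReal)
  set X : ℕ → ℕ → Ω → ℝ := fun N i ω => if τ N i ω ≤ t then 1 else 0
  have hX_meas (N i : ℕ) : Measurable (X N i) :=
    (measurable_const.ite measurableSet_Iic measurable_const).comp (hτmeas N i)
  have hX_mean (N i : ℕ) (hi : i < N) : ∫ ω, X N i ω ∂μ = 1 - p N i := by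
    rw [integral_ite_le_one_zero_eq (hτmeas N i), measureReal_def, hτlaw N i hi,
      ENNReal.toReal_ofReal (Real.exp_pos _).le]
  have h_indep (N : ℕ) :
      iIndepFun (fun i : Fin N => fun ω => X N i ω - ∫ ω', X N i ω' ∂μ) μ :=
    (hτindep N).comp (fun i x => (if x ≤ t then 1 else 0) - ∫ ω, X N i ω ∂μ) fun _ =>
      (measurable_const.ite measurableSet_Iic measurable_const).sub_const _
  have h_fluct : ∀ᵐ ω ∂μ, Tendsto
      (fun N : ℕ => (∑ i ∈ range N, (X N i ω - ∫ ω', X N i ω' ∂μ)) / N) atTop (𝓝 0) :=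
    ae_tendsto_sum_div_of_iIndepFun_hasSubgaussianMGF h_indep fun N i _ =>
      hasSubgaussianMGF_of_mem_Icc (a := 0) (b := 1) (hX_meas N i).aemeasurable
        (ae_of_all _ fun ω => by simp only [X]; split_ifs <;> simp)
  have h_means : Tendsto (fun N : ℕ => (∑ i ∈ range N, ∫ ω, X N i ω ∂μ) / N) atTop
      (𝓝 (1 - ∫ s, Real.exp (-s) ∂lamt)) := by
    refine ((tendsto_sum_exp_neg_div_of_forall_boundedContinuousFunction
      (fun _ _ => ENNReal.toReal_nonneg) hlamsupp hweak).const_sub 1).congr' ?_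
    filter_upwards [eventually_ne_atTop 0] with N hN
    rw [sum_congr rfl fun i hi => hX_mean N i (mem_range.1 hi), sum_sub_distrib, sum_const,
      card_range, nsmul_one, sub_div, div_self (Nat.cast_ne_zero.2 hN)]
  filter_upwards [h_fluct] with ω hω
  have h_sum := hω.add h_means
  rw [zero_add] at h_sum
  refine h_sum.congr fun N => ?_
  rw [← add_div, ← sum_add_distrib]
  simp only [sub_add_cancel, X]

/-- first jump times `τ N i` of independent Poisson random measures with
continuous intensities `ρ N i` satisfy `P[τ N i > t] = exp (-ρ N i ((0,t]))`.  If the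
empirical distributions of the numbers `ρ N i ((0,t])` converge weakly to a probability
measure `lamt` on `[0,∞)`, then `Y_C^{(N)}(t) = (1/N) ∑ 1{τ N i ≤ t}` converges almost
surely to `y_C(t) = 1 - ∫ e^{-s} lamt(ds)`. -/
theorem stmt1
    {Ω : Type*} [MeasurableSpace Ω] (μ : Measure Ω) [IsProbabilityMeasure μ]
    (t : ℝ) (ht : 0 ≤ t)
    (ρ : ℕ → ℕ → Measure ℝ)
    (hρfin : ∀ N i, ρ N i (Set.Ioc 0 t) ≠ ⊤)
    (hρcont : ∀ N i x, ρ N i {x} = 0)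
    (τ : ℕ → ℕ → Ω → ℝ)
    (hτmeas : ∀ N i, Measurable (τ N i))
    (hτindep : ∀ N, ProbabilityTheory.iIndepFun
      (fun i : Fin N => τ N (i : ℕ)) μ)
    (hτlaw : ∀ N i, i < N →
      μ {ω | t < τ N i ω} =
        ENNReal.ofReal (Real.exp (-((ρ N i (Set.Ioc 0 t)).toReal))))
    (lamt : Measure ℝ) [IsProbabilityMeasure lamt] (hlamsupp : lamt (Set.Iio 0) = 0)
    (hweak : ∀ f : BoundedContinuousFunction ℝ ℝ,
      Tendsto (fun N : ℕ =>
          (∑ i ∈ Finset.range N, f ((ρ N i (Set.Ioc 0 t)).toReal)) / N)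
        atTop (nhds (∫ s, f s ∂lamt))) :
    ∀ᵐ ω ∂μ, Tendsto
      (fun N : ℕ =>
        (∑ i ∈ Finset.range N, if τ N i ω ≤ t then (1 : ℝ) else 0) / N)
      atTop (nhds (1 - ∫ s, Real.exp (-s) ∂lamt)) :=
  stmt1_general μ t ρ τ hτmeas hτindep hτlaw lamt hlamsupp hweak
end

section
/- Suppose for each $t\ge 0$ the empirical distributions $\lambda_t^{(N)}$ converge weakly to probability measures $\lambda_t$, and that $t\mapsto\lambda_t$ is continuous in the weak topology. Then for almost every sample point $\omega$, the nondecreasing functions $Y_C^{(N)}(\cdot)(\omega)$ converge pointwise in $t\in[0,\infty)$ to the continuous nondecreasing function $y_C(t)=1-\int_0^\infty e^{-s}\lambda_t(ds)$. -/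
/-!
At a fixed time `t` the indicators `1{τ_{N,i} ≤ t}`, `i < N`, are independent and bounded, so
Hoeffding's inequality bounds the probability that their empirical mean deviates from its
expectation by `ε` by a term geometric in `N`; Borel–Cantelli then gives almost sure convergence
of the empirical mean to the limit of the expectations. These expectations are
`1 - exp (-ρ_{N,i}((0,t]))`, and weak convergence identifies the limit of their average as
`1 - ∫ e^{-s} λ_t(ds)`: the integrand may be replaced by the bounded function `e^{-max s 0}`
because `λ_t`, a weak limit of measures on `[0, ∞)`, gives no mass to `(-∞, 0)`.
Countably many rational times are handled at once, and since the empirical distribution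
functions are monotone in `t` and the limit is continuous, convergence at rational times
squeezes convergence at every time.
-/

open MeasureTheory Filter ProbabilityTheory
open scoped NNReal BoundedContinuousFunction

namespace ProbabilityTheory.HasSubgaussianMGF

variable {Ω : Type*} [MeasurableSpace Ω] {μ : Measure Ω} {X : Ω → ℝ} {c d : ℝ≥0}

lemma mono_s2 (h : HasSubgaussianMGF X c μ) (hcd : c ≤ d) : HasSubgaussianMGF X d μ where
  integrable_exp_mul := h.integrable_exp_mul
  mgf_le t := (h.mgf_le t).trans <| by gcongr

end ProbabilityTheory.HasSubgaussianMGF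

section StrongLaw

variable {Ω : Type*} [MeasurableSpace Ω] {μ : Measure Ω}

lemma ae_eventually_notMem_of_measureReal_le [IsFiniteMeasure μ] {s : ℕ → Set Ω} {f : ℕ → ℝ}
    (hf : Summable f) (hs : ∀ n, μ.real (s n) ≤ f n) :
    ∀ᵐ ω ∂μ, ∀ᶠ n in atTop, ω ∉ s n := by
  refine ae_eventually_notMem
    (ne_top_of_le_ne_top (b := ENNReal.ofReal (∑' n, f n)) ENNReal.ofReal_ne_top ?_)
  rw [ENNReal.ofReal_tsum_of_nonneg (fun n => measureReal_nonneg.trans (hs n)) hf]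
  exact ENNReal.tsum_le_tsum fun n => by
    rw [← ofReal_measureReal]
    exact ENNReal.ofReal_le_ofReal (hs n)

lemma ae_tendsto_zero_of_forall_ae_eventually_abs_lt {f : ℕ → Ω → ℝ}
    (h : ∀ ε > 0, ∀ᵐ ω ∂μ, ∀ᶠ n in atTop, |f n ω| < ε) :
    ∀ᵐ ω ∂μ, Tendsto (f · ω) atTop (nhds 0) := by
  have hk : ∀ᵐ ω ∂μ, ∀ k : ℕ, ∀ᶠ n in atTop, |f n ω| < 1 / ((k : ℝ) + 1) :=
    ae_all_iff.2 fun k => h _ Nat.one_div_pos_of_nat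
  filter_upwards [hk] with ω hω
  refine NormedAddGroup.tendsto_nhds_zero.2 fun ε hε => ?_
  obtain ⟨k, hkε⟩ := exists_nat_one_div_lt hε
  filter_upwards [hω k] with n hn using hn.trans hkε

variable [IsProbabilityMeasure μ]

lemma ae_eventually_sum_lt_of_hasSubgaussianMGF {Y : ℕ → ℕ → Ω → ℝ} {c : ℝ≥0}
    (hindep : ∀ N, iIndepFun (fun i : Fin N => Y N i) μ)
    (hY : ∀ N i, HasSubgaussianMGF (Y N i) c μ) {ε : ℝ} (hε : 0 < ε) :
    ∀ᵐ ω ∂μ, ∀ᶠ N in atTop, ∑ i ∈ Finset.range N, Y N i ω < ε * N := by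
  -- the parameter is raised to `c + 1` so that the Hoeffding bound is geometric even when `c = 0`
  set r := Real.exp (-ε ^ 2 / (2 * (c + 1)))
  have hr : r < 1 := Real.exp_lt_one_iff.2 <|
    div_neg_of_neg_of_pos (neg_neg_of_pos (by positivity)) (by positivity)
  have htail : ∀ N : ℕ, μ.real {ω | ε * N ≤ ∑ i : Fin N, Y N i ω} ≤ r ^ N := by
    intro N
    refine (HasSubgaussianMGF.measure_sum_ge_le_of_iIndepFun (hindep N) (c := fun _ => c + 1)
      (fun i _ => (hY N i).mono_s2 le_self_add) (by positivity)).trans_eq ?_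
    rw [← Real.exp_nat_mul]
    rcases N.eq_zero_or_pos with rfl | hN
    · simp
    · simp only [Finset.sum_const, Finset.card_univ, Fintype.card_fin, nsmul_eq_mul]
      push_cast
      field_simp
  filter_upwards [ae_eventually_notMem_of_measureReal_le
    (summable_geometric_of_lt_one (Real.exp_pos _).le hr) htail] with ω hω
  filter_upwards [hω] with N hN
  simpa [Fin.sum_univ_eq_sum_range (fun i => Y N i ω)] using hN

theorem ae_tendsto_sum_div_of_hasSubgaussianMGF {Y : ℕ → ℕ → Ω → ℝ} {c : ℝ≥0}
    (hindep : ∀ N, iIndepFun (fun i : Fin N => Y N i) μ)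
    (hY : ∀ N i, HasSubgaussianMGF (Y N i) c μ) :
    ∀ᵐ ω ∂μ, Tendsto (fun N : ℕ => (∑ i ∈ Finset.range N, Y N i ω) / N) atTop (nhds 0) := by
  refine ae_tendsto_zero_of_forall_ae_eventually_abs_lt fun ε hε => ?_
  have hindep_neg : ∀ N, iIndepFun (fun i : Fin N => -Y N i) μ := fun N =>
    (hindep N).comp (fun _ => Neg.neg) fun _ => measurable_neg
  filter_upwards [ae_eventually_sum_lt_of_hasSubgaussianMGF hindep hY hε,
    ae_eventually_sum_lt_of_hasSubgaussianMGF hindep_neg (fun N i => (hY N i).neg) hε]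
    with ω hupper hlower
  filter_upwards [hupper, hlower, eventually_gt_atTop 0] with N hup hlo hN
  simp only [Pi.neg_apply, Finset.sum_neg_distrib] at hlo
  rw [abs_div, Nat.abs_cast, div_lt_iff₀ (by positivity), abs_lt]
  constructor <;> linarith

theorem ae_tendsto_sum_div_of_mem_Icc {X : ℕ → ℕ → Ω → ℝ}
    (hmeas : ∀ N i, AEMeasurable (X N i) μ) (hindep : ∀ N, iIndepFun (fun i : Fin N => X N i) μ)
    {a b : ℝ} (hab : ∀ N i ω, X N i ω ∈ Set.Icc a b) {L : ℝ}
    (hL : Tendsto (fun N : ℕ => (∑ i ∈ Finset.range N, ∫ ω, X N i ω ∂μ) / N) atTop (nhds L)) :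
    ∀ᵐ ω ∂μ, Tendsto (fun N : ℕ => (∑ i ∈ Finset.range N, X N i ω) / N) atTop (nhds L) := by
  have hcentered := ae_tendsto_sum_div_of_hasSubgaussianMGF
    (Y := fun N i ω => X N i ω - ∫ x, X N i x ∂μ)
    (fun N => (hindep N).comp (fun i x => x - ∫ x, X N i x ∂μ) fun _ => measurable_id.sub_const _)
    (fun N i => hasSubgaussianMGF_of_mem_Icc (hmeas N i) (ae_of_all _ (hab N i)))
  filter_upwards [hcentered] with ω hω
  simpa [← add_div, ← Finset.sum_add_distrib] using hω.add hL

theorem ae_tendsto_empirical_cdf {τ : ℕ → ℕ → Ω → ℝ} (hτmeas : ∀ N i, Measurable (τ N i))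
    (hτindep : ∀ N, iIndepFun (fun i : Fin N => τ N i) μ) (t : ℝ) {L : ℝ}
    (hL : Tendsto (fun N : ℕ => (∑ i ∈ Finset.range N, μ.real {ω | τ N i ω ≤ t}) / N)
      atTop (nhds L)) :
    ∀ᵐ ω ∂μ, Tendsto (fun N : ℕ =>
      (∑ i ∈ Finset.range N, if τ N i ω ≤ t then (1 : ℝ) else 0) / N) atTop (nhds L) := by
  have hint : ∀ N i, ∫ ω, (if τ N i ω ≤ t then (1 : ℝ) else 0) ∂μ = μ.real {ω | τ N i ω ≤ t} := by
    intro N i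
    rw [← integral_indicator_one (measurableSet_le (hτmeas N i) measurable_const)]
    simp [Set.indicator_apply]
  refine ae_tendsto_sum_div_of_mem_Icc (a := 0) (b := 1)
    (fun N i => (Measurable.ite (measurableSet_le (hτmeas N i) measurable_const)
      measurable_const measurable_const).aemeasurable)
    (fun N => (hτindep N).comp (fun _ x => if x ≤ t then (1 : ℝ) else 0)
      fun _ => Measurable.ite measurableSet_Iic measurable_const measurable_const)
    (fun N i ω => by split_ifs <;> simp) ?_
  simpa only [hint] using hL

end StrongLaw

theorem measureReal_le_eq_one_sub {Ω : Type*} [MeasurableSpace Ω] {μ : Measure Ω}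
    [IsProbabilityMeasure μ] {τ : Ω → ℝ} (hτ : Measurable τ) {t p : ℝ} (hp : 0 ≤ p)
    (hlaw : μ {ω | t < τ ω} = ENNReal.ofReal p) :
    μ.real {ω | τ ω ≤ t} = 1 - p := by
  have hset : {ω | τ ω ≤ t} = {ω | t < τ ω}ᶜ := by ext; simp
  rw [hset, probReal_compl_eq_one_sub (measurableSet_lt measurable_const hτ), measureReal_def,
    hlaw, ENNReal.toReal_ofReal hp]

theorem monotone_sum_ite_le_div {ι : Type*} (s : Finset ι) (x : ι → ℝ) {n : ℝ} (hn : 0 ≤ n) :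
    Monotone fun t => (∑ i ∈ s, if x i ≤ t then (1 : ℝ) else 0) / n := by
  intro u v huv
  refine div_le_div_of_nonneg_right (Finset.sum_le_sum fun i _ => ?_) hn
  split_ifs with hu hv <;> [rfl; exact absurd (hu.trans huv) hv; exact zero_le_one; rfl]

theorem tendsto_of_monotone_of_tendsto_rat {α : Type*} {l : Filter α} {f : α → ℝ → ℝ}
    (hf : ∀ n, Monotone (f n)) {y : ℝ → ℝ} {t : ℝ} (hy : ContinuousAt y t)
    (hq : ∀ q : ℚ, Tendsto (fun n => f n q) l (nhds (y q))) :
    Tendsto (fun n => f n t) l (nhds (y t)) := by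
  refine tendsto_order.2 ⟨fun a ha => ?_, fun b hb => ?_⟩
  · obtain ⟨u, hut, hu⟩ := exists_Ioc_subset_of_mem_nhds (hy.eventually (lt_mem_nhds ha))
      ⟨t - 1, by linarith⟩
    obtain ⟨q, huq, hqt⟩ := exists_rat_btwn hut
    filter_upwards [(tendsto_order.1 (hq q)).1 a (hu ⟨huq, hqt.le⟩)] with n hn
    exact hn.trans_le (hf n hqt.le)
  · obtain ⟨u, htu, hu⟩ := exists_Ico_subset_of_mem_nhds (hy.eventually (gt_mem_nhds hb))
      ⟨t + 1, by linarith⟩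
    obtain ⟨q, htq, hqu⟩ := exists_rat_btwn htu
    filter_upwards [(tendsto_order.1 (hq q)).2 b (hu ⟨htq.le, hqu⟩)] with n hn
    exact (hf n htq.le).trans_lt hn

theorem measure_Iio_zero_eq_zero_of_tendsto_sum_div {ν : Measure ℝ} [IsFiniteMeasure ν]
    {r : ℕ → ℕ → ℝ} (hr : ∀ N i, 0 ≤ r N i)
    (hweak : ∀ f : ℝ →ᵇ ℝ, Tendsto (fun N : ℕ => (∑ i ∈ Finset.range N, f (r N i)) / N)
      atTop (nhds (∫ s, f s ∂ν))) :
    ν (Set.Iio 0) = 0 := by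
  let h : ℝ →ᵇ ℝ := .ofNormedAddCommGroup (fun s => min 1 (max (-s) 0)) (by fun_prop) 1
    fun s => by rw [Real.norm_of_nonneg (by positivity)]; exact min_le_left _ _
  have h_nonneg : 0 ≤ ⇑h := fun s => by simp [h]
  have h_zero : ∫ s, h s ∂ν = 0 := by
    refine tendsto_nhds_unique (hweak h) ?_
    simp [h, hr]
  have h_ae := (integral_eq_zero_iff_of_nonneg h_nonneg (h.integrable ν)).1 h_zero
  refine measure_mono_null (fun s hs => ?_) (ae_iff.1 h_ae)
  simp only [Set.mem_Iio] at hs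
  simp [h, hs.le, (lt_min one_pos (neg_pos.2 hs)).ne']

noncomputable def expNegPos : ℝ →ᵇ ℝ :=
  .ofNormedAddCommGroup (fun s => Real.exp (-max s 0)) (by fun_prop) 1 fun s => by
    rw [Real.norm_of_nonneg (Real.exp_nonneg _), Real.exp_le_one_iff, neg_nonpos]
    exact le_max_right s 0

theorem expNegPos_apply (s : ℝ) : expNegPos s = Real.exp (-max s 0) := rfl

theorem integral_one_sub_expNegPos {ν : Measure ℝ} [IsProbabilityMeasure ν]
    (hν : ν (Set.Iio 0) = 0) :
    ∫ s, (1 - expNegPos) s ∂ν = 1 - ∫ s, Real.exp (-s) ∂ν := by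
  have hexp : ∫ s, Real.exp (-s) ∂ν = ∫ s, expNegPos s ∂ν := by
    refine integral_congr_ae ?_
    filter_upwards [measure_eq_zero_iff_ae_notMem.1 hν] with s hs
    rw [expNegPos_apply, max_eq_left (not_lt.1 hs)]
  simp [hexp, integral_sub (integrable_const 1) (expNegPos.integrable ν)]

theorem stmt2_general
    {Ω : Type*} [MeasurableSpace Ω] (μ : Measure Ω) [IsProbabilityMeasure μ]
    (ρ : ℕ → ℕ → Measure ℝ)
    (τ : ℕ → ℕ → Ω → ℝ)
    (hτmeas : ∀ N i, Measurable (τ N i))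
    (hτindep : ∀ N, ProbabilityTheory.iIndepFun
      (fun i : Fin N => τ N (i : ℕ)) μ)
    (hτlaw : ∀ N i, i < N → ∀ t : ℝ, 0 ≤ t →
      μ {ω | t < τ N i ω} =
        ENNReal.ofReal (Real.exp (-((ρ N i (Set.Ioc 0 t)).toReal))))
    (lam : ℝ → ProbabilityMeasure ℝ)
    (hlamcont : ContinuousOn lam (Set.Ici 0))
    (hweak : ∀ t : ℝ, 0 ≤ t → ∀ f : BoundedContinuousFunction ℝ ℝ,
      Tendsto (fun N : ℕ =>
          (∑ i ∈ Finset.range N, f ((ρ N i (Set.Ioc 0 t)).toReal)) / N)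
        atTop (nhds (∫ s, f s ∂(lam t : Measure ℝ)))) :
    ∀ᵐ ω ∂μ, ∀ t : ℝ, 0 ≤ t → Tendsto
      (fun N : ℕ =>
        (∑ i ∈ Finset.range N, if τ N i ω ≤ t then (1 : ℝ) else 0) / N)
      atTop (nhds (1 - ∫ s, Real.exp (-s) ∂(lam t : Measure ℝ))) := by
  set y : ℝ → ℝ := fun t => ∫ s, (1 - expNegPos) s ∂(lam t : Measure ℝ)
  have hy : ∀ t, 0 ≤ t → y t = 1 - ∫ s, Real.exp (-s) ∂(lam t : Measure ℝ) := fun t ht =>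
    integral_one_sub_expNegPos <| measure_Iio_zero_eq_zero_of_tendsto_sum_div
      (fun _ _ => ENNReal.toReal_nonneg) (hweak t ht)
  have hfixed : ∀ t, 0 ≤ t → ∀ᵐ ω ∂μ, Tendsto (fun N : ℕ =>
      (∑ i ∈ Finset.range N, if τ N i ω ≤ t then (1 : ℝ) else 0) / N) atTop (nhds (y t)) :=
    fun t ht => ae_tendsto_empirical_cdf hτmeas hτindep t <|
      (hweak t ht (1 - expNegPos)).congr fun N => congrArg (· / (N : ℝ)) <|
        Finset.sum_congr rfl fun i hi => by
          rw [measureReal_le_eq_one_sub (hτmeas N i) (Real.exp_nonneg _)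
            (hτlaw N i (Finset.mem_range.1 hi) t ht)]
          simp [expNegPos_apply]
  -- `max t 0` extends the data from `[0, ∞)` to a continuous limit and monotone prelimits on `ℝ`
  have hrat : ∀ᵐ ω ∂μ, ∀ q : ℚ, Tendsto (fun N : ℕ =>
      (∑ i ∈ Finset.range N, if τ N i ω ≤ max (q : ℝ) 0 then (1 : ℝ) else 0) / N)
      atTop (nhds (y (max q 0))) :=
    ae_all_iff.2 fun q => hfixed _ (le_max_right _ _)
  have hycont : Continuous fun t => y (max t 0) :=
    ((ProbabilityMeasure.continuous_integral_boundedContinuousFunction _).comp_continuousOn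
      hlamcont).comp_continuous (by fun_prop) fun t => le_max_right t 0
  filter_upwards [hrat] with ω hω t ht
  have key := tendsto_of_monotone_of_tendsto_rat (t := t)
    (fun N => (monotone_sum_ite_le_div _ _ N.cast_nonneg).comp (monotone_id.max monotone_const))
    hycont.continuousAt hω
  simpa only [Function.comp_apply, id, max_eq_left ht, hy t ht] using key

/-- if the empirical distributions of `ρ N i ((0,t])` converge weakly to
probability measures `lam t` for every `t ≥ 0`, and `t ↦ lam t` is continuous in the weak
topology, then for almost every sample `ω` the nondecreasing functions
`Y_C^{(N)}(·)(ω)` converge pointwise on `[0,∞)` to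
`y_C(t) = 1 - ∫ e^{-s} (lam t)(ds)`. -/
theorem stmt2
    {Ω : Type*} [MeasurableSpace Ω] (μ : Measure Ω) [IsProbabilityMeasure μ]
    (ρ : ℕ → ℕ → Measure ℝ)
    (hρfin : ∀ N i t, ρ N i (Set.Ioc 0 t) ≠ ⊤)
    (hρcont : ∀ N i x, ρ N i {x} = 0)
    (τ : ℕ → ℕ → Ω → ℝ)
    (hτmeas : ∀ N i, Measurable (τ N i))
    (hτindep : ∀ N, ProbabilityTheory.iIndepFun
      (fun i : Fin N => τ N (i : ℕ)) μ)
    (hτlaw : ∀ N i, i < N → ∀ t : ℝ, 0 ≤ t →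
      μ {ω | t < τ N i ω} =
        ENNReal.ofReal (Real.exp (-((ρ N i (Set.Ioc 0 t)).toReal))))
    (lam : ℝ → ProbabilityMeasure ℝ)
    (hlamcont : ContinuousOn lam (Set.Ici 0))
    (hweak : ∀ t : ℝ, 0 ≤ t → ∀ f : BoundedContinuousFunction ℝ ℝ,
      Tendsto (fun N : ℕ =>
          (∑ i ∈ Finset.range N, f ((ρ N i (Set.Ioc 0 t)).toReal)) / N)
        atTop (nhds (∫ s, f s ∂(lam t : Measure ℝ)))) :
    ∀ᵐ ω ∂μ, ∀ t : ℝ, 0 ≤ t → Tendsto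
      (fun N : ℕ =>
        (∑ i ∈ Finset.range N, if τ N i ω ≤ t then (1 : ℝ) else 0) / N)
      atTop (nhds (1 - ∫ s, Real.exp (-s) ∂(lam t : Measure ℝ))) :=
  stmt2_general μ ρ τ hτmeas hτindep hτlaw lam hlamcont hweak
end
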